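/- Fix integers d ≥ 1 and 1 ≤ k ≤ d, and let N := {x ∈ ℝ^d : x has at most k nonzero coordinates}, viewed as a subset of d-dimensional Euclidean space. If x ∈ N has exactly k nonzero coordinates, then N is prox-regular at x: there exists δ > 0 such that every y ∈ ℝ^d with ‖y − x‖ < δ has a unique nearest point in N, i.e., a unique p ∈ N with ‖y − p‖ = infDist(y, N). -/

import Mathlib

/-!
Let `S` be the support of `x` and pick `0 < c < min_{i ∈ S} |x i|`. Near `x`, every `y` has
`|y i| > c` on `S` and `|y i| < c` off `S`, and then the restriction of `y` to `S` is the unique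
nearest `k`-sparse point. A competitor `q` supported on `T` with `#T ≤ #S` is at squared distance
at least `∑_{i ∉ T} y i ^ 2`. If `T` misses a point of `S`, this exceeds `∑_{i ∉ S} y i ^ 2`,
since the coordinates in `T \ S` are fewer and smaller than those in `S \ T`; otherwise `T = S`
and `q` differs from `y` at some point of `S`.
-/

open Finset Filter Topology

section

variable {ι : Type*} [DecidableEq ι]

def restrictTo (S : Finset ι) (y : EuclideanSpace ℝ ι) : EuclideanSpace ℝ ι :=
  WithLp.toLp 2 fun i ↦ if i ∈ S then y i else 0

@[simp]
theorem restrictTo_apply (S : Finset ι) (y : EuclideanSpace ℝ ι) (i : ι) :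
    restrictTo S y i = if i ∈ S then y i else 0 :=
  rfl

theorem ncard_support_restrictTo_le (S : Finset ι) (y : EuclideanSpace ℝ ι) :
    {i | restrictTo S y i ≠ 0}.ncard ≤ #S := by
  rw [← Set.ncard_coe_finset]
  refine Set.ncard_le_ncard (fun i hi ↦ ?_) S.finite_toSet
  by_contra h
  simp_all

variable [Fintype ι]

theorem sum_sq_compl_lt_of_not_subset {S T : Finset ι} {y : ι → ℝ} {c : ℝ} (hc : 0 ≤ c)
    (hS : ∀ i ∈ S, c < |y i|) (hSc : ∀ i ∉ S, |y i| ≤ c) (hcard : #T ≤ #S) (hST : ¬S ⊆ T) :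
    ∑ i ∈ Sᶜ, y i ^ 2 < ∑ i ∈ Tᶜ, y i ^ 2 := by
  have hsmall : ∑ i ∈ T \ S, y i ^ 2 ≤ #(T \ S) * c ^ 2 := by
    simpa using sum_le_card_nsmul (T \ S) (fun i ↦ y i ^ 2) (c ^ 2) fun i hi ↦
      sq_le_sq.2 <| by simpa [abs_of_nonneg hc] using hSc i (mem_sdiff.1 hi).2
  have hlarge : #(S \ T) * c ^ 2 < ∑ i ∈ S \ T, y i ^ 2 := by
    simpa using sum_lt_sum_of_nonempty (sdiff_nonempty.2 hST) (f := fun _ ↦ c ^ 2) fun i hi ↦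
      sq_lt_sq.2 <| by simpa [abs_of_nonneg hc] using hS i (mem_sdiff.1 hi).1
  have hcards : (#(T \ S) : ℝ) * c ^ 2 ≤ #(S \ T) * c ^ 2 :=
    mul_le_mul_of_nonneg_right (mod_cast card_sdiff_le_card_sdiff_iff.2 hcard) (sq_nonneg c)
  rw [← sum_inter_add_sum_sdiff Sᶜ Tᶜ, ← sum_inter_add_sum_sdiff Tᶜ Sᶜ, compl_sdiff_compl,
    compl_sdiff_compl, inter_comm]
  linarith

theorem norm_sub_sq_eq_of_forall_notMem_eq_zero {T : Finset ι} {y q : EuclideanSpace ℝ ι}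
    (hq : ∀ i ∉ T, q i = 0) :
    ‖y - q‖ ^ 2 = ∑ i ∈ T, (y i - q i) ^ 2 + ∑ i ∈ Tᶜ, y i ^ 2 := by
  rw [EuclideanSpace.real_norm_sq_eq, ← sum_add_sum_compl T]
  congr 1
  exact sum_congr rfl fun i hi ↦ by simp [hq i (mem_compl.1 hi)]

theorem norm_sub_restrictTo_sq (S : Finset ι) (y : EuclideanSpace ℝ ι) :
    ‖y - restrictTo S y‖ ^ 2 = ∑ i ∈ Sᶜ, y i ^ 2 := by
  rw [norm_sub_sq_eq_of_forall_notMem_eq_zero (T := S) fun i hi ↦ by simp [hi]]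
  simp +contextual

theorem dist_restrictTo_lt_dist {S : Finset ι} {y q : EuclideanSpace ℝ ι} {c : ℝ} (hc : 0 ≤ c)
    (hS : ∀ i ∈ S, c < |y i|) (hSc : ∀ i ∉ S, |y i| ≤ c)
    (hq : {i | q i ≠ 0}.ncard ≤ #S) (hqy : q ≠ restrictTo S y) :
    dist y (restrictTo S y) < dist y q := by
  rw [dist_eq_norm, dist_eq_norm, ← sq_lt_sq₀ (norm_nonneg _) (norm_nonneg _),
    norm_sub_restrictTo_sq]
  by_cases hqS : ∀ i ∉ S, q i = 0
  · obtain ⟨i, hi⟩ : ∃ i, q i ≠ restrictTo S y i := by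
      by_contra! h
      exact hqy (PiLp.ext h)
    have hiS : i ∈ S := by
      by_contra h
      simp [hqS i h, h] at hi
    rw [norm_sub_sq_eq_of_forall_notMem_eq_zero hqS, lt_add_iff_pos_left]
    refine sum_pos' (fun j _ ↦ sq_nonneg _) ⟨i, hiS, ?_⟩
    simp only [restrictTo_apply, if_pos hiS] at hi
    have : y i - q i ≠ 0 := sub_ne_zero.2 hi.symm
    positivity
  · classical
    set T := {i | q i ≠ 0}.toFinset
    have hqT : ∀ i ∉ T, q i = 0 := by simp [T]
    have hTS : #T ≤ #S := by rwa [← Set.ncard_eq_toFinset_card']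
    have hST : ¬S ⊆ T := fun h ↦ hqS fun i hi ↦
      hqT i fun hiT ↦ hi ((eq_of_subset_of_card_le h hTS) ▸ hiT)
    calc ∑ i ∈ Sᶜ, y i ^ 2 < ∑ i ∈ Tᶜ, y i ^ 2 := sum_sq_compl_lt_of_not_subset hc hS hSc hTS hST
      _ ≤ ∑ i ∈ T, (y i - q i) ^ 2 + ∑ i ∈ Tᶜ, y i ^ 2 :=
        le_add_of_nonneg_left (sum_nonneg fun i _ ↦ sq_nonneg _)
      _ = ‖y - q‖ ^ 2 := (norm_sub_sq_eq_of_forall_notMem_eq_zero hqT).symm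

end

theorem existsUnique_dist_eq_infDist {α : Type*} [PseudoMetricSpace α] {s : Set α} {y p : α}
    (hp : p ∈ s) (hmin : ∀ q ∈ s, q ≠ p → dist y p < dist y q) :
    ∃! q, q ∈ s ∧ dist y q = Metric.infDist y s := by
  have hinf : Metric.infDist y s = dist y p :=
    le_antisymm (Metric.infDist_le_dist_of_mem hp) <| (Metric.le_infDist ⟨p, hp⟩).2 fun q hq ↦ by
      rcases eq_or_ne q p with rfl | hqp
      · exact le_rfl
      · exact (hmin q hq hqp).le
  refine ⟨p, ⟨hp, hinf.symm⟩, fun q ⟨hq, hqd⟩ ↦ ?_⟩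
  by_contra hqp
  exact (hmin q hq hqp).ne (hqd.trans hinf).symm

theorem exists_pos_lt_abs_of_ne_zero {ι : Type*} [Finite ι] (x : ι → ℝ) :
    ∃ c > 0, ∀ i, x i ≠ 0 → c < |x i| := by
  have h : ∀ᶠ c in 𝓝[>] (0 : ℝ), ∀ i, x i ≠ 0 → c < |x i| :=
    eventually_all.2 fun i ↦ nhdsWithin_le_nhds <| by
      by_cases hi : x i = 0
      · simp [hi]
      · exact (eventually_lt_nhds (abs_pos.2 hi)).mono fun c hc _ ↦ hc
  obtain ⟨c, hc, hc0⟩ := (h.and self_mem_nhdsWithin).exists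
  exact ⟨c, hc0, hc⟩

theorem eventually_lt_abs_apply_and_abs_apply_lt {ι : Type*} [Finite ι]
    {x : EuclideanSpace ℝ ι} {c : ℝ} (hc : 0 < c) (hcx : ∀ i, x i ≠ 0 → c < |x i|) :
    ∀ᶠ y in 𝓝 x, ∀ i, (x i ≠ 0 → c < |y i|) ∧ (x i = 0 → |y i| < c) := by
  refine eventually_all.2 fun i ↦ ?_
  have hcont : Tendsto (fun y : EuclideanSpace ℝ ι ↦ |y i|) (𝓝 x) (𝓝 |x i|) :=
    ((PiLp.continuous_apply 2 _ i).abs).tendsto x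
  by_cases hi : x i = 0
  · exact (hcont.eventually_lt_const (by simpa [hi] using hc)).mono fun y hy ↦
      ⟨fun h ↦ (h hi).elim, fun _ ↦ hy⟩
  · exact (hcont.eventually_const_lt (hcx i hi)).mono fun y hy ↦
      ⟨fun _ ↦ hy, fun h ↦ (hi h).elim⟩

theorem sparse_set_prox_regular
    (d k : ℕ)
    (x : EuclideanSpace ℝ (Fin d))
    (hx : {i : Fin d | x i ≠ 0}.ncard = k) :
    ∃ δ > (0 : ℝ), ∀ y : EuclideanSpace ℝ (Fin d), ‖y - x‖ < δ →
      ∃! p : EuclideanSpace ℝ (Fin d),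
        p ∈ {v : EuclideanSpace ℝ (Fin d) | {i : Fin d | v i ≠ 0}.ncard ≤ k} ∧
        ‖y - p‖ = Metric.infDist y
          {v : EuclideanSpace ℝ (Fin d) | {i : Fin d | v i ≠ 0}.ncard ≤ k} := by
  classical
  set S := {i | x i ≠ 0}.toFinset
  have hS : #S = k := by rw [← hx, Set.ncard_eq_toFinset_card']
  obtain ⟨c, hc, hcx⟩ := exists_pos_lt_abs_of_ne_zero x
  obtain ⟨δ, hδ, hnear⟩ :=
    Metric.eventually_nhds_iff.1 (eventually_lt_abs_apply_and_abs_apply_lt hc hcx)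
  refine ⟨δ, hδ, fun y hy ↦ ?_⟩
  have hsep := hnear (by rwa [dist_eq_norm])
  simp_rw [← dist_eq_norm]
  exact existsUnique_dist_eq_infDist (hS ▸ ncard_support_restrictTo_le S y) fun q hq hqy ↦
    dist_restrictTo_lt_dist hc.le (fun i hi ↦ (hsep i).1 (by simpa [S] using hi))
      (fun i hi ↦ ((hsep i).2 (by simpa [S] using hi)).le) (hS ▸ hq) hqy
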